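/- Let a_n := 4^{−n}·√(π·(n+1/2))·C(2n, n) for integers n ≥ 0, where C(2n, n) is the central binomial coefficient. Then the sequence (a_n) is nonincreasing, it tends to 1 as n → ∞, and consequently a_n ≥ 1 for every n ≥ 0, i.e. 4^n ≤ √(π·(n+1/2))·C(2n, n). -/

import Mathlib

open Real Filter

noncomputable section

/-- The sequence `a n = 4^{-n} √(π(n+1/2)) C(2n,n)`. -/
def centralBinomSeq (n : ℕ) : ℝ :=
  ((4 : ℝ) ^ n)⁻¹ * Real.sqrt (π * ((n : ℝ) + 1/2)) * (Nat.choose (2 * n) n : ℝ)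

/-!
The square of `a n` is `(π / 2) / W n`, where `W n` is the `n`-th partial Wallis product
`∏_{k<n} (2k+2)² / ((2k+1)(2k+3))`. Each factor of that product exceeds `1` and the product
increases to `π / 2`, so `a n` decreases to `1`.
-/

namespace Real.Wallis

theorem W_eq_four_pow_sq_div_choose (n : ℕ) :
    W n = ((4 : ℝ) ^ n) ^ 2 / ((2 * n + 1) * (Nat.choose (2 * n) n : ℝ) ^ 2) := by
  have hfac := Nat.choose_mul_factorial_mul_factorial (by omega : n ≤ 2 * n)
  rw [show 2 * n - n = n by omega] at hfac
  have hpow : (2 : ℝ) ^ (4 * n) = ((4 : ℝ) ^ n) ^ 2 := by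
    rw [← pow_mul, pow_mul, mul_comm, pow_mul]; norm_num
  rw [W_eq_factorial_ratio, ← hfac, hpow]
  have : (0 : ℝ) < Nat.choose (2 * n) n := mod_cast Nat.choose_pos (by omega)
  push_cast
  field_simp

theorem monotone_W : Monotone W := by
  refine monotone_nat_of_le_succ fun k => ?_
  rw [W_succ]
  refine le_mul_of_one_le_right (W_pos k).le ?_
  rw [div_mul_div_comm, one_le_div (by positivity)]
  nlinarith

end Real.Wallis

open Real.Wallis

theorem centralBinomSeq_nonneg (n : ℕ) : 0 ≤ centralBinomSeq n := by
  unfold centralBinomSeq; positivity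

theorem centralBinomSeq_sq (n : ℕ) : centralBinomSeq n ^ 2 = π / 2 / W n := by
  have : (0 : ℝ) < Nat.choose (2 * n) n := mod_cast Nat.choose_pos (by omega)
  rw [centralBinomSeq, W_eq_four_pow_sq_div_choose, mul_pow, mul_pow, sq_sqrt (by positivity)]
  field_simp

theorem centralBinomSeq_eq_sqrt (n : ℕ) : centralBinomSeq n = √(π / 2 / W n) := by
  rw [← centralBinomSeq_sq, sqrt_sq (centralBinomSeq_nonneg n)]

theorem centralBinomSeq_antitone : Antitone centralBinomSeq := fun m n hmn => by
  simp only [centralBinomSeq_eq_sqrt]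
  exact sqrt_le_sqrt (div_le_div_of_nonneg_left pi_div_two_pos.le (W_pos m) (monotone_W hmn))

theorem tendsto_centralBinomSeq : Tendsto centralBinomSeq atTop (nhds 1) := by
  have h : Tendsto (fun n => π / 2 / W n) atTop (nhds (π / 2 / (π / 2))) :=
    tendsto_const_nhds.div tendsto_W_nhds_pi_div_two pi_div_two_pos.ne'
  rw [div_self pi_div_two_pos.ne'] at h
  simpa only [sqrt_one] using h.sqrt.congr fun n => (centralBinomSeq_eq_sqrt n).symm

theorem one_le_centralBinomSeq (n : ℕ) : 1 ≤ centralBinomSeq n :=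
  centralBinomSeq_antitone.le_of_tendsto tendsto_centralBinomSeq n

/-- the sequence `a n = 4^{-n} √(π(n+1/2)) C(2n,n)` is nonincreasing, tends
to `1`, hence is bounded below by `1`, i.e. `4^n ≤ √(π(n+1/2)) C(2n,n)`. -/
theorem stmt_19 :
    Antitone centralBinomSeq ∧
    Tendsto centralBinomSeq atTop (nhds 1) ∧
    (∀ n : ℕ, 1 ≤ centralBinomSeq n) ∧
    (∀ n : ℕ, (4 : ℝ) ^ n ≤ Real.sqrt (π * ((n : ℝ) + 1/2)) * (Nat.choose (2 * n) n : ℝ)) := by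
  refine ⟨centralBinomSeq_antitone, tendsto_centralBinomSeq, one_le_centralBinomSeq, fun n => ?_⟩
  have h := one_le_centralBinomSeq n
  rwa [centralBinomSeq, mul_assoc, le_inv_mul_iff₀ (by positivity), mul_one] at h

end
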